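/- If λ₀, λ₁ ∈ Λ, then |h(λ₀) − h(λ₁)| ≤ ρ·|λ₀ − λ₁|, where h(λ) denotes the unique fixed point of Q*_λ in {z : |z − 1| ≤ |Q(1)|/p}. -/

import Mathlib

open Filter Metric

/-- The polynomial family `P_λ(z) = (λ/p)·z^p + (1 − λ/p)·z^{p+1}`. -/
noncomputable def Pfam {K : Type*} [NontriviallyNormedField K] (p : ℕ) (lam z : K) : K :=
  lam / (p : K) * z ^ p + (1 - lam / (p : K)) * z ^ (p + 1)

/-- Evaluation at `z` of the power series with coefficients `a`. -/
noncomputable def Qser {K : Type*} [NontriviallyNormedField K] (a : ℕ → K) (z : K) : K :=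
  ∑' i, a i * z ^ i

/-- The perturbed map `Q*_λ = P_λ + Q`. -/
noncomputable def Qstar {K : Type*} [NontriviallyNormedField K] (p : ℕ) (a : ℕ → K)
    (lam z : K) : K :=
  Pfam p lam z + Qser a z

section Aux

open IsUltrametricDist

variable {K : Type*} [NontriviallyNormedField K] [IsUltrametricDist K]

lemma aux_pow_sub_one {x : K} (hx : ‖x‖ ≤ 1) (n : ℕ) : ‖x ^ n - 1‖ ≤ ‖x - 1‖ := by
  induction n with
  | zero => simp
  | succ n ih =>
    have hrw : x ^ (n + 1) - 1 = x ^ n * (x - 1) + (x ^ n - 1) := by ring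
    rw [hrw]
    refine (norm_add_le_max _ _).trans (max_le ?_ ih)
    rw [norm_mul]
    calc ‖x ^ n‖ * ‖x - 1‖ ≤ 1 * ‖x - 1‖ :=
          mul_le_mul_of_nonneg_right
            (by rw [norm_pow]; exact pow_le_one₀ (norm_nonneg _) hx) (norm_nonneg _)
      _ = ‖x - 1‖ := one_mul _

lemma aux_mul_pow_sub_one {x y : K} (hx : ‖x‖ ≤ 1) (hy : ‖y‖ ≤ 1) (j k : ℕ) :
    ‖x ^ j * y ^ k - 1‖ ≤ max ‖x - 1‖ ‖y - 1‖ := by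
  have hrw : x ^ j * y ^ k - 1 = x ^ j * (y ^ k - 1) + (x ^ j - 1) := by ring
  rw [hrw]
  refine (norm_add_le_max _ _).trans (max_le ?_ ?_)
  · rw [norm_mul]
    calc ‖x ^ j‖ * ‖y ^ k - 1‖ ≤ 1 * ‖y - 1‖ := by
          refine mul_le_mul ?_ (aux_pow_sub_one hy k) (norm_nonneg _) zero_le_one
          rw [norm_pow]; exact pow_le_one₀ (norm_nonneg _) hx
      _ = ‖y - 1‖ := one_mul _
      _ ≤ _ := le_max_right _ _
  · exact (aux_pow_sub_one hx j).trans (le_max_left _ _)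

lemma aux_norm_add_eq_left {x y : K} (h : ‖y‖ < ‖x‖) : ‖x + y‖ = ‖x‖ := by
  rw [norm_add_eq_max_of_norm_ne_norm (by exact fun he => absurd he h.ne'), max_eq_left h.le]

end Aux

/-- Lipschitz property of the fixed point `h(λ)` of `Q*_λ`: if `λ₀, λ₁ ∈ Λ`, then
`|h(λ₀) − h(λ₁)| ≤ ρ·|λ₀ − λ₁|`, where `ρ = p^{-1/(p-1)}` and `h λ` denotes the unique
fixed point of `Q*_λ` in `{z : |z − 1| ≤ |Q(1)|/p}`.  Here `K` plays the role of `ℂ_p`. -/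
theorem statement10 (p : ℕ) (hp : p.Prime)
    {K : Type*} [NontriviallyNormedField K] [IsAlgClosed K] [CompleteSpace K]
    [IsUltrametricDist K] [CharZero K]
    (hpnorm : ‖(p : K)‖ = (p : ℝ)⁻¹)
    (rhat : ℝ) (hrhat : 1 < rhat) (hrhatval : ∃ x : K, x ≠ 0 ∧ ‖x‖ = rhat)
    (a : ℕ → K)
    (hQnorm : ∃ C : ℝ, C < (p : ℝ) ^ (-(1:ℝ) / ((p : ℝ) - 1)) ∧ ∀ i : ℕ, ‖a i‖ * rhat ^ i ≤ C)
    (h : K → K)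
    (hfix : ∀ lam : K, ‖lam - 1‖ < 1 →
      ‖h lam - 1‖ ≤ ‖Qser a 1‖ / p ∧ Qstar p a lam (h lam) = h lam)
    (lam₀ lam₁ : K) (hlam₀ : ‖lam₀ - 1‖ < 1) (hlam₁ : ‖lam₁ - 1‖ < 1) :
    ‖h lam₀ - h lam₁‖ ≤ (p : ℝ) ^ (-(1:ℝ) / ((p : ℝ) - 1)) * ‖lam₀ - lam₁‖ := by
  classical
  open IsUltrametricDist in
  obtain ⟨C, hCρ, hC⟩ := hQnorm
  set ρ : ℝ := (p : ℝ) ^ (-(1:ℝ) / ((p : ℝ) - 1)) with hρdef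
  have hp1 : (1 : ℝ) < (p : ℝ) := by exact_mod_cast hp.one_lt
  have hp0 : (0 : ℝ) < (p : ℝ) := lt_trans one_pos hp1
  have hρ1 : ρ < 1 := by
    refine Real.rpow_lt_one_of_one_lt_of_neg hp1 ?_
    have h1 : (0:ℝ) < (p:ℝ) - 1 := by linarith
    exact div_neg_of_neg_of_pos (by norm_num) h1
  have hC0 : 0 ≤ C := le_trans (norm_nonneg (a 0)) (by simpa using hC 0)
  have hC1 : C < 1 := hCρ.trans hρ1
  -- coefficient bounds
  have hCa1 : ∀ i, ‖a i‖ ≤ C := by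
    intro i
    refine le_trans ?_ (hC i)
    nlinarith [norm_nonneg (a i), one_le_pow₀ (le_of_lt hrhat) (n := i)]
  have hCa : ∀ i, ‖a i‖ ≤ C * (1 / rhat) ^ i := by
    intro i
    have h1 : (0:ℝ) < rhat ^ i := by positivity
    rw [div_pow, one_pow, mul_one_div, le_div_iff₀ h1]
    exact hC i
  -- summability
  have hgeom : Summable (fun i : ℕ => C * (1 / rhat) ^ i) :=
    (summable_geometric_of_lt_one (by positivity) (by rw [div_lt_one (lt_trans one_pos hrhat)]; exact hrhat)).mul_left C
  have hsum : ∀ z : K, ‖z‖ ≤ 1 → Summable (fun i : ℕ => a i * z ^ i) := by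
    intro z hz
    refine Summable.of_norm_bounded hgeom (fun i => ?_)
    rw [norm_mul, norm_pow]
    calc ‖a i‖ * ‖z‖ ^ i ≤ ‖a i‖ * 1 := by
          gcongr
          exact pow_le_one₀ (norm_nonneg _) hz
      _ = ‖a i‖ := mul_one _
      _ ≤ _ := hCa i
  -- norm of p in K
  have hpK0 : (p : K) ≠ 0 := Nat.cast_ne_zero.mpr hp.ne_zero
  -- fixed points
  obtain ⟨hx1, hxf⟩ := hfix lam₀ hlam₀
  obtain ⟨hy1, hyf⟩ := hfix lam₁ hlam₁
  set x := h lam₀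
  set y := h lam₁
  -- ‖Qser a 1‖ ≤ C
  have hQ1 : ‖Qser a 1‖ ≤ C := by
    refine norm_tsum_le_of_forall_le_of_nonneg hC0 (fun i => ?_)
    simpa using hCa1 i
  have hx1' : ‖x - 1‖ ≤ C / p := hx1.trans (by gcongr)
  have hy1' : ‖y - 1‖ ≤ C / p := hy1.trans (by gcongr)
  have hCp1 : C / p < 1 := by
    calc C / (p:ℝ) ≤ C / 1 := by gcongr
      _ = C := div_one C
      _ < 1 := hC1
  have hnx : ‖x‖ ≤ 1 := by
    calc ‖x‖ = ‖1 + (x - 1)‖ := by congr 1; ring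
      _ ≤ max ‖(1:K)‖ ‖x - 1‖ := norm_add_le_max _ _
      _ ≤ 1 := max_le (by simp) (le_of_lt (lt_of_le_of_lt hx1' hCp1))
  have hny : ‖y‖ ≤ 1 := by
    calc ‖y‖ = ‖1 + (y - 1)‖ := by congr 1; ring
      _ ≤ max ‖(1:K)‖ ‖y - 1‖ := norm_add_le_max _ _
      _ ≤ 1 := max_le (by simp) (le_of_lt (lt_of_le_of_lt hy1' hCp1))
  have hnlam : ‖lam₀‖ = 1 := by
    have : lam₀ = 1 + (lam₀ - 1) := by ring
    rw [this, aux_norm_add_eq_left (by simpa using hlam₀), norm_one]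
  -- divided differences
  set δ : K := x - y with hδdef
  set A : K := ∑ j ∈ Finset.range p, x ^ j * y ^ (p - 1 - j) with hAdef
  set B : K := ∑ j ∈ Finset.range (p + 1), x ^ j * y ^ (p + 1 - 1 - j) with hBdef
  set T : K := ∑' i, a i * ∑ j ∈ Finset.range i, x ^ j * y ^ (i - 1 - j) with hTdef
  have hA : A * δ = x ^ p - y ^ p := geom_sum₂_mul x y p
  have hB : B * δ = x ^ (p + 1) - y ^ (p + 1) := geom_sum₂_mul x y (p + 1)
  have hQsub : Qser a x - Qser a y = T * δ := by
    rw [Qser, Qser, ← Summable.tsum_sub (hsum x hnx) (hsum y hny), hTdef, ← tsum_mul_right]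
    refine tsum_congr fun i => ?_
    rw [hδdef, mul_assoc, geom_sum₂_mul]
    ring
  -- bound on T
  have hterm : ∀ i : ℕ, ∀ j k : ℕ, ‖x ^ j * y ^ k‖ ≤ 1 := by
    intro i j k
    rw [norm_mul, norm_pow, norm_pow]
    exact mul_le_one₀ (pow_le_one₀ (norm_nonneg _) hnx) (by positivity)
      (pow_le_one₀ (norm_nonneg _) hny)
  have hT : ‖T‖ ≤ C := by
    refine norm_tsum_le_of_forall_le_of_nonneg hC0 (fun i => ?_)
    rw [norm_mul]
    calc ‖a i‖ * ‖∑ j ∈ Finset.range i, x ^ j * y ^ (i - 1 - j)‖ ≤ ‖a i‖ * 1 := by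
          gcongr
          exact norm_sum_le_of_forall_le_of_nonneg zero_le_one (fun j _ => hterm i j _)
      _ ≤ C := by simpa using hCa1 i
  -- A and B are close to p and p+1
  have hmax : max ‖x - 1‖ ‖y - 1‖ ≤ C / p := max_le hx1' hy1'
  have hAp : ‖A - (p : K)‖ ≤ C / p := by
    have hAe : A - (p : K) = ∑ j ∈ Finset.range p, (x ^ j * y ^ (p - 1 - j) - 1) := by
      rw [Finset.sum_sub_distrib, Finset.sum_const, Finset.card_range, nsmul_eq_mul, mul_one,
        hAdef]
    rw [hAe]
    refine norm_sum_le_of_forall_le_of_nonneg (by positivity) (fun j _ => ?_)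
    exact (aux_mul_pow_sub_one hnx hny j _).trans hmax
  have hBp : ‖B - ((p : K) + 1)‖ ≤ C / p := by
    have hBe : B - ((p : K) + 1) = ∑ j ∈ Finset.range (p + 1), (x ^ j * y ^ (p + 1 - 1 - j) - 1) := by
      rw [Finset.sum_sub_distrib, Finset.sum_const, Finset.card_range, nsmul_eq_mul, mul_one,
        hBdef]
      push_cast
      ring
    rw [hBe]
    refine norm_sum_le_of_forall_le_of_nonneg (by positivity) (fun j _ => ?_)
    exact (aux_mul_pow_sub_one hnx hny j _).trans hmax
  -- the key algebraic identity
  set S : K := lam₀ / (p : K) * A + (1 - lam₀ / (p : K)) * B + T - 1 with hSdef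
  have e1 : lam₀ / (p : K) * x ^ p + (1 - lam₀ / (p : K)) * x ^ (p + 1) + Qser a x = x := hxf
  have e2 : lam₁ / (p : K) * y ^ p + (1 - lam₁ / (p : K)) * y ^ (p + 1) + Qser a y = y := hyf
  have hkey : S * δ = -((lam₀ - lam₁) / (p : K)) * (y ^ p - y ^ (p + 1)) := by
    rw [hSdef, hδdef]
    linear_combination e1 - e2 + (lam₀ / (p : K)) * hA + (1 - lam₀ / (p : K)) * hB - hQsub
  -- norms of coefficients
  have hnormlamp : ‖lam₀ / (p : K)‖ = (p : ℝ) := by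
    rw [norm_div, hnlam, hpnorm, one_div, inv_inv]
  have hnorm1mlamp : ‖1 - lam₀ / (p : K)‖ ≤ (p : ℝ) := by
    calc ‖1 - lam₀ / (p : K)‖ = ‖(1 : K) + -(lam₀ / (p : K))‖ := by congr 1; ring
      _ ≤ max ‖(1:K)‖ ‖-(lam₀ / (p : K))‖ := norm_add_le_max _ _
      _ ≤ (p : ℝ) := by
          rw [norm_neg, hnormlamp, norm_one]
          exact max_le (le_of_lt hp1) le_rfl
  -- ‖S‖ = p
  have hE : ‖(p : K) + (lam₀ / (p : K)) * (A - (p : K))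
      + (1 - lam₀ / (p : K)) * (B - ((p : K) + 1)) + T‖ ≤ 1 := by
    refine (norm_add_le_max _ _).trans (max_le ((norm_add_le_max _ _).trans
      (max_le ((norm_add_le_max _ _).trans (max_le ?_ ?_)) ?_)) ?_)
    · rw [hpnorm]
      exact inv_le_one_of_one_le₀ (le_of_lt hp1)
    · rw [norm_mul, hnormlamp]
      calc (p : ℝ) * ‖A - (p : K)‖ ≤ (p : ℝ) * (C / p) := by gcongr
        _ = C := by field_simp
        _ ≤ 1 := le_of_lt hC1
    · rw [norm_mul]
      calc ‖1 - lam₀ / (p : K)‖ * ‖B - ((p : K) + 1)‖ ≤ (p : ℝ) * (C / p) := by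
            exact mul_le_mul hnorm1mlamp hBp (norm_nonneg _) (le_of_lt hp0)
        _ = C := by field_simp
        _ ≤ 1 := le_of_lt hC1
    · exact hT.trans (le_of_lt hC1)
  have hSrw : S = -(lam₀ / (p : K)) + ((p : K) + (lam₀ / (p : K)) * (A - (p : K))
      + (1 - lam₀ / (p : K)) * (B - ((p : K) + 1)) + T) := by
    rw [hSdef]; ring
  have hSnorm : ‖S‖ = (p : ℝ) := by
    have hlt : ‖(p : K) + (lam₀ / (p : K)) * (A - (p : K))
        + (1 - lam₀ / (p : K)) * (B - ((p : K) + 1)) + T‖ < ‖-(lam₀ / (p : K))‖ := by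
      rw [norm_neg, hnormlamp]
      exact lt_of_le_of_lt hE hp1
    rw [hSrw, aux_norm_add_eq_left hlt, norm_neg, hnormlamp]
  -- bound the right-hand side
  have hRHS : ‖-((lam₀ - lam₁) / (p : K)) * (y ^ p - y ^ (p + 1))‖ ≤ C * ‖lam₀ - lam₁‖ := by
    have hyfac : y ^ p - y ^ (p + 1) = y ^ p * (1 - y) := by ring
    rw [norm_mul, norm_neg, norm_div, hpnorm, hyfac, norm_mul, div_eq_mul_inv, inv_inv]
    have h1 : ‖y ^ p‖ ≤ 1 := by rw [norm_pow]; exact pow_le_one₀ (norm_nonneg _) hny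
    have h2 : ‖1 - y‖ ≤ C / p := by rw [norm_sub_rev]; exact hy1'
    calc ‖lam₀ - lam₁‖ * (p : ℝ) * (‖y ^ p‖ * ‖1 - y‖)
        ≤ ‖lam₀ - lam₁‖ * (p : ℝ) * (1 * (C / p)) := by gcongr
      _ = C * ‖lam₀ - lam₁‖ := by field_simp
  -- conclude
  have hfinal : (p : ℝ) * ‖δ‖ ≤ C * ‖lam₀ - lam₁‖ := by
    calc (p : ℝ) * ‖δ‖ = ‖S‖ * ‖δ‖ := by rw [hSnorm]
      _ = ‖S * δ‖ := (norm_mul _ _).symm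
      _ = ‖-((lam₀ - lam₁) / (p : K)) * (y ^ p - y ^ (p + 1))‖ := by rw [hkey]
      _ ≤ C * ‖lam₀ - lam₁‖ := hRHS
  have hδρ : ‖δ‖ ≤ ρ * ‖lam₀ - lam₁‖ := by
    have h1 : ‖δ‖ ≤ C / p * ‖lam₀ - lam₁‖ := by
      rw [div_mul_eq_mul_div, le_div_iff₀ hp0, mul_comm ‖δ‖]
      exact hfinal
    refine h1.trans ?_
    gcongr
    calc C / (p : ℝ) ≤ C / 1 := by gcongr
      _ = C := div_one C
      _ ≤ ρ := le_of_lt hCρ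
  exact hδρ
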